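/- Suppose p is generic for G, some node label B_{ii} with 1 ≤ i ≤ n−2 is a nonzero square mod p, the subspaces V and V_{0,n−1} are nonsingular while at least one of V_0, V_{n−1} is singular, G_{0,n−1}^p is of orthogonal type on V_{0,n−1}, and moreover G^p = O_1(V) in the case that G_{0,n−1}^p = O_1(V_{0,n−1}). Then G_0^p ∩ G_{n−1}^p = G_{0,n−1}^p. -/

import Mathlib

/- Setup: reduction mod an odd prime `p` of a crystallographic Coxeter group
`G = ⟨r₀, …, r_{n−1}⟩` with string diagram and Gram matrix `B`. -/

namespace Statement6

variable (n p : ℕ)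

/-- `V = (ZMod p)^n`. -/
abbrev V := Fin n → ZMod p

/-- The general linear group of `V`. -/
abbrev GLV := (Module.End (ZMod p) (V n p))ˣ

/-- Reduction of a rational number mod `p` (meaningful when the denominator is prime to `p`). -/
def redQ (q : ℚ) : ZMod p := (q.num : ZMod p) * ((q.den : ZMod p))⁻¹

/-- The standard basis vector `b_i`. -/
def basisVec (i : Fin n) : V n p := Pi.single i 1

/-- The symmetric bilinear form on `V` obtained by reducing the Gram matrix `B` mod `p`. -/
def form (B : Matrix (Fin n) (Fin n) ℚ) (x y : V n p) : ZMod p :=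
  ∑ i, ∑ j, x i * redQ p (B i j) * y j

/-- `B` is the Gram matrix of a basic system for a crystallographic Coxeter group with
string diagram: symmetric, tridiagonal, positive integer node labels, integer Cartan
entries, and branch condition `4 B_{i-1,i}² = c ⬝ B_{i-1,i-1} ⬝ B_{ii}` with `c ∈ {1,2,3,4}`
(or `B_{i-1,i} = 0`, i.e. an absent branch). -/
def GramOK (B : Matrix (Fin n) (Fin n) ℚ) : Prop :=
  (∀ i j, B i j = B j i) ∧
  (∀ i j : Fin n, 1 < |(i : ℤ) - (j : ℤ)| → B i j = 0) ∧
  (∀ i, ∃ m : ℕ, 0 < m ∧ B i i = m) ∧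
  (∀ i j, ∃ c : ℤ, 2 * B i j / B i i = (c : ℚ)) ∧
  (∀ i : Fin n, ∀ h : (i : ℕ) + 1 < n,
    B i ⟨(i : ℕ) + 1, h⟩ = 0 ∨
      ∃ c : ℕ, 1 ≤ c ∧ c ≤ 4 ∧
        4 * (B i ⟨(i : ℕ) + 1, h⟩) ^ 2 = c * B i i * B ⟨(i : ℕ) + 1, h⟩ ⟨(i : ℕ) + 1, h⟩)

/-- All entries of `B` are `p`-integral. -/
def PIntegral (B : Matrix (Fin n) (Fin n) ℚ) : Prop :=
  ∀ i j, ¬ (p ∣ (B i j).den)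

/-- `p` is generic for `G`: either `p ≥ 5`, or `p = 3` and no branch is labelled `6`
(a branch `{i, i+1}` is labelled `6` exactly when `4 B_{i,i+1}² = 3 ⬝ B_{ii} ⬝ B_{i+1,i+1}`). -/
def Generic (B : Matrix (Fin n) (Fin n) ℚ) : Prop :=
  5 ≤ p ∨ (p = 3 ∧ ∀ i : Fin n, ∀ h : (i : ℕ) + 1 < n,
    4 * (B i ⟨(i : ℕ) + 1, h⟩) ^ 2 ≠ 3 * B i i * B ⟨(i : ℕ) + 1, h⟩ ⟨(i : ℕ) + 1, h⟩)

/-- `r i` is the reduction mod `p` of the generating reflection `r_i`, determined by its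
action on the standard basis: `r_i(b_j) = b_j − C_{ij} b_i` with `C_{ij} = 2 B_{ij}/B_{ii}`. -/
def ReflHyp (B : Matrix (Fin n) (Fin n) ℚ) (r : Fin n → GLV n p) : Prop :=
  ∀ i j : Fin n, (r i).1 (basisVec n p j) =
    basisVec n p j - redQ p (2 * B i j / B i i) • basisVec n p i

/-- The intersection property (string C-group condition) for the subgroups generated by
the reflections `r i`, `i ∈ S`. -/
def IsStringC (r : Fin n → GLV n p) (S : Set (Fin n)) : Prop :=
  ∀ I J : Set (Fin n), I ⊆ S → J ⊆ S →
    Subgroup.closure (r '' I) ⊓ Subgroup.closure (r '' J) = Subgroup.closure (r '' (I ∩ J))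

/-- The span of the basis vectors `b_i`, `i ∈ S`. -/
def spanV (S : Set (Fin n)) : Submodule (ZMod p) (V n p) :=
  Submodule.span (ZMod p) (basisVec n p '' S)

/-- The subspace `W` is nonsingular: the restriction of the form to `W` is nondegenerate. -/
def Nonsing (B : Matrix (Fin n) (Fin n) ℚ) (W : Submodule (ZMod p) (V n p)) : Prop :=
  ∀ x ∈ W, (∀ y ∈ W, form n p B x y = 0) → x = 0

/-- The full orthogonal group `O(V)` of the form, as a subgroup of `GL(V)`. -/
def OV (B : Matrix (Fin n) (Fin n) ℚ) : Subgroup (GLV n p) where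
  carrier := {g | ∀ x y, form n p B (g.1 x) (g.1 y) = form n p B x y}
  one_mem' := by intro x y; simp
  mul_mem' := by
    intro a b ha hb x y
    simpa [Units.val_mul] using (ha (b.1 x) (b.1 y)).trans (hb x y)
  inv_mem' := by
    intro a ha x y
    have key : ∀ z, a.1 ((a⁻¹ : GLV n p).1 z) = z := by
      intro z
      rw [← Module.End.mul_apply, ← Units.val_mul, mul_inv_cancel, Units.val_one,
        Module.End.one_apply]
    have h := ha ((a⁻¹ : GLV n p).1 x) ((a⁻¹ : GLV n p).1 y)
    rw [key, key] at h
    exact h.symm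

/-- `g` fixes `W^⊥` pointwise. -/
def perpFix (B : Matrix (Fin n) (Fin n) ℚ) (W : Submodule (ZMod p) (V n p))
    (g : GLV n p) : Prop :=
  ∀ u : V n p, (∀ w ∈ W, form n p B u w = 0) → g.1 u = u

/-- `O(W)` identified with the subgroup `{g ∈ O(V) : g(W) = W, g fixes W^⊥ pointwise}`
of `O(V)`. -/
def OSub (B : Matrix (Fin n) (Fin n) ℚ) (W : Submodule (ZMod p) (V n p)) :
    Subgroup (GLV n p) where
  carrier := {g | g ∈ OV n p B ∧ Submodule.map g.1 W = W ∧ perpFix n p B W g}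
  one_mem' := by
    refine ⟨(OV n p B).one_mem, ?_, fun u _ => by simp⟩
    simp [Module.End.one_eq_id]
  mul_mem' := by
    rintro a b ⟨ha1, ha2, ha3⟩ ⟨hb1, hb2, hb3⟩
    refine ⟨mul_mem ha1 hb1, ?_, ?_⟩
    · rw [Units.val_mul, Module.End.mul_eq_comp, Submodule.map_comp, hb2, ha2]
    · intro u hu
      rw [Units.val_mul, Module.End.mul_apply, hb3 u hu, ha3 u hu]
  inv_mem' := by
    rintro a ⟨ha1, ha2, ha3⟩
    have key : ∀ z, (a⁻¹ : GLV n p).1 (a.1 z) = z := fun z => by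
      rw [← Module.End.mul_apply, ← Units.val_mul, inv_mul_cancel, Units.val_one,
        Module.End.one_apply]
    refine ⟨(OV n p B).inv_mem ha1, ?_, ?_⟩
    · conv_lhs => rw [← ha2]
      rw [← Submodule.map_comp, ← Module.End.mul_eq_comp, ← Units.val_mul, inv_mul_cancel,
        Units.val_one, Module.End.one_eq_id]
      simp
    · intro u hu
      conv_lhs => rw [← ha3 u hu]
      exact key u

/-- `g` is the reflection `r_a` with root `a ∈ W`, where `a·a` is a nonzero square. -/
def IsSqRefl (B : Matrix (Fin n) (Fin n) ℚ) (W : Submodule (ZMod p) (V n p))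
    (g : GLV n p) : Prop :=
  ∃ a ∈ W, (∃ t : ZMod p, t ≠ 0 ∧ form n p B a a = t ^ 2) ∧
    ∀ x, g.1 x = x - (2 * form n p B x a * (form n p B a a)⁻¹) • a

/-- `g` is the reflection `r_a` with root `a ∈ W`, where `a·a` is a nonsquare. -/
def IsNonsqRefl (B : Matrix (Fin n) (Fin n) ℚ) (W : Submodule (ZMod p) (V n p))
    (g : GLV n p) : Prop :=
  ∃ a ∈ W, (∀ t : ZMod p, form n p B a a ≠ t ^ 2) ∧
    ∀ x, g.1 x = x - (2 * form n p B x a * (form n p B a a)⁻¹) • a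

/-- `O₁(W)` (resp. `Ô₁(W)` when `W` is singular): the subgroup generated by all
reflections `r_a` with root `a ∈ W` of square norm. -/
def O1 (B : Matrix (Fin n) (Fin n) ℚ) (W : Submodule (ZMod p) (V n p)) :
    Subgroup (GLV n p) :=
  Subgroup.closure {g | IsSqRefl n p B W g}

/-- `O₂(W)`: the subgroup generated by all reflections `r_a` with root `a ∈ W`
of nonsquare norm. -/
def O2 (B : Matrix (Fin n) (Fin n) ℚ) (W : Submodule (ZMod p) (V n p)) :
    Subgroup (GLV n p) :=
  Subgroup.closure {g | IsNonsqRefl n p B W g}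

/-- `H` is of orthogonal type on the (nonsingular) subspace `W`. -/
def OrthType (B : Matrix (Fin n) (Fin n) ℚ) (W : Submodule (ZMod p) (V n p))
    (H : Subgroup (GLV n p)) : Prop :=
  H = OSub n p B W ∨ H = O1 n p B W ∨ H = O2 n p B W

/-! Every generator `r_i`, `i ∈ T`, is a reflection with root in `V_T`, so `G_Tᵖ` preserves `V_T`
and fixes `V_T^⊥`. Since `V` is nonsingular, `V_{0,n-1}^⊥ = V_0^⊥ + V_{n-1}^⊥`, hence
`G_0ᵖ ∩ G_{n-1}ᵖ ≤ O(V_{0,n-1})`; this is the claim when `G_{0,n-1}ᵖ = O(V_{0,n-1})`.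

The sign of the permutation that an isometry induces on the sphere `{x | x·x = c}` is a character
which is `-1` on `r_a` exactly when `c · a·a` is a square. With `c = 1` it is trivial on `O₂` but
not on the reflection in a node of square label, so `G_{0,n-1}ᵖ ≠ O₂(V_{0,n-1})`.

If `G_{0,n-1}ᵖ = O₁(V_{0,n-1})`, let `V_T = V_{0,n-1} + ⟨b_k⟩` be singular, with radical `⟨l⟩`.
Write `b_k = w + t l` with `w ∈ V_{0,n-1}`. Modulo `⟨l⟩`, `r_k` acts on `V_{0,n-1}` as `r_w`, so
an element of `G_0ᵖ ∩ G_{n-1}ᵖ` equals an element of `O₁(V_{0,n-1}) ∪ r_w O₁(V_{0,n-1})`. If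
`w·w` is a square then `r_w ∈ O₁(V_{0,n-1})`; otherwise the sign on a sphere of nonsquare norm,
trivial on `Gᵖ = O₁(V)`, excludes the second coset. -/

section Reduction

variable {n p : ℕ} [Fact p.Prime]

lemma redQ_intCast (c : ℤ) : redQ p c = c := by
  simp [redQ]

lemma redQ_mul_den {q : ℚ} (hq : ¬ p ∣ q.den) : redQ p q * q.den = q.num := by
  have hden : (q.den : ZMod p) ≠ 0 := by rwa [Ne, ZMod.natCast_eq_zero_iff]
  rw [redQ, mul_assoc, inv_mul_cancel₀ hden, mul_one]

lemma redQ_mul_intCast_eq {q q' : ℚ} (hq : ¬ p ∣ q.den) (hq' : ¬ p ∣ q'.den) {a b : ℤ}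
    (h : q * b = a * q') : redQ p q * b = a * redQ p q' := by
  have hden : (q.den : ZMod p) * q'.den ≠ 0 := by
    simp only [Ne, mul_eq_zero, ZMod.natCast_eq_zero_iff]
    tauto
  have hint : q.num * b * q'.den = a * q'.num * q.den := by
    rw [← Rat.num_div_den q, ← Rat.num_div_den q'] at h
    field_simp at h
    have h' : ((q.num * b * q'.den : ℤ) : ℚ) = ((a * q'.num * q.den : ℤ) : ℚ) := by
      push_cast; linear_combination h
    exact_mod_cast h'
  refine mul_right_cancel₀ hden ?_
  have := congrArg (fun z : ℤ => (z : ZMod p)) hint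
  push_cast at this
  linear_combination (q'.den : ZMod p) * b * redQ_mul_den hq -
    a * q.den * redQ_mul_den hq' + this

end Reduction

section Form

variable {n p : ℕ} {B : Matrix (Fin n) (Fin n) ℚ}

/-- `form` as a bilinear form, so that the orthogonality theory of `LinearMap.BilinForm`
applies. -/
def bform (B : Matrix (Fin n) (Fin n) ℚ) : LinearMap.BilinForm (ZMod p) (V n p) :=
  (B.map (redQ p)).toBilin'

lemma bform_apply (x y : V n p) : bform B x y = form n p B x y :=
  Matrix.toBilin'_apply _ x y

lemma form_add_right (x y y' : V n p) :
    form n p B x (y + y') = form n p B x y + form n p B x y' := by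
  simp only [← bform_apply, map_add]

lemma form_sub_left (x x' y : V n p) :
    form n p B (x - x') y = form n p B x y - form n p B x' y := by
  simp only [← bform_apply, map_sub, LinearMap.sub_apply]

lemma form_sub_right (x y y' : V n p) :
    form n p B x (y - y') = form n p B x y - form n p B x y' := by
  simp only [← bform_apply, map_sub]

lemma form_smul_left (c : ZMod p) (x y : V n p) :
    form n p B (c • x) y = c * form n p B x y := by
  simp only [← bform_apply, map_smul, LinearMap.smul_apply, smul_eq_mul]

lemma form_smul_right (c : ZMod p) (x y : V n p) :
    form n p B x (c • y) = c * form n p B x y := by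
  simp only [← bform_apply, map_smul, smul_eq_mul]

lemma form_comm (hs : ∀ i j, B i j = B j i) (x y : V n p) :
    form n p B x y = form n p B y x := by
  rw [form, form, Finset.sum_comm]
  simp only [hs]
  exact Finset.sum_congr rfl fun _ _ => Finset.sum_congr rfl fun _ _ => by ring

lemma bform_isSymm (hs : ∀ i j, B i j = B j i) : (bform (p := p) B).IsSymm :=
  ⟨fun x y => by simp only [bform_apply, form_comm hs x y]⟩

lemma bform_nondegenerate (hs : ∀ i j, B i j = B j i) (hV : Nonsing n p B ⊤) :
    (bform (p := p) B).Nondegenerate := by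
  refine ⟨fun x hx => hV x trivial fun y _ => ?_, fun y hy => hV y trivial fun x _ => ?_⟩
  · rw [← bform_apply]; exact hx y
  · rw [← bform_apply, (bform_isSymm hs).eq]; exact hy x

lemma form_basisVec_basisVec (i j : Fin n) :
    form n p B (basisVec n p i) (basisVec n p j) = redQ p (B i j) := by
  simp [← bform_apply, bform, basisVec, Matrix.toBilin'_single]

end Form

section Reflection

variable {n p : ℕ} [Fact p.Prime] {B : Matrix (Fin n) (Fin n) ℚ}

def reflection (a : V n p) (ha : form n p B a a ≠ 0) : GLV n p :=
  LinearMap.GeneralLinearGroup.ofLinearEquiv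
    (Module.reflection (x := a) (f := (2 * (form n p B a a)⁻¹) • (bform B).flip a)
      (by simp [bform_apply, mul_assoc, inv_mul_cancel₀ ha]))

lemma reflection_apply {a : V n p} (ha : form n p B a a ≠ 0) (x : V n p) :
    (reflection a ha).1 x = x - (2 * form n p B x a * (form n p B a a)⁻¹) • a := by
  simp only [reflection, LinearMap.GeneralLinearGroup.coe_ofLinearEquiv,
    Module.reflection_apply, LinearMap.smul_apply, smul_eq_mul]
  rw [LinearMap.BilinForm.flip_apply, bform_apply]
  ring_nf

lemma reflection_inv {a : V n p} (ha : form n p B a a ≠ 0) :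
    (reflection a ha)⁻¹ = reflection a ha := by
  rw [reflection, ← LinearMap.GeneralLinearGroup.ofLinearEquiv_inv, Module.reflection_inv]

lemma reflection_mul_self {a : V n p} (ha : form n p B a a ≠ 0) :
    reflection a ha * reflection a ha = 1 := by
  nth_rewrite 2 [← reflection_inv ha]
  exact mul_inv_cancel _

lemma eq_reflection {g : GLV n p} {a : V n p} (ha : form n p B a a ≠ 0)
    (hg : ∀ x, g.1 x = x - (2 * form n p B x a * (form n p B a a)⁻¹) • a) :
    g = reflection a ha :=
  Units.ext (LinearMap.ext fun x => by rw [hg, reflection_apply])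

lemma reflection_apply_of_form_eq_zero {a x : V n p} (ha : form n p B a a ≠ 0)
    (hx : form n p B x a = 0) : (reflection a ha).1 x = x := by
  simp [reflection_apply, hx]

lemma reflection_mem_OV (hs : ∀ i j, B i j = B j i) {a : V n p}
    (ha : form n p B a a ≠ 0) : reflection a ha ∈ OV n p B := by
  intro x y
  simp only [reflection_apply, form_sub_left, form_sub_right, form_smul_left,
    form_smul_right, form_comm hs a]
  field_simp
  ring

lemma map_eq_of_forall_mem {U : Submodule (ZMod p) (V n p)} {g : GLV n p}
    (hg : ∀ x ∈ U, g.1 x ∈ U) (hg' : ∀ x ∈ U, (g⁻¹).1 x ∈ U) : U.map g.1 = U := by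
  refine le_antisymm (Submodule.map_le_iff_le_comap.mpr hg) fun x hx => ⟨_, hg' x hx, ?_⟩
  change (g * g⁻¹).1 x = x
  simp

lemma reflection_mem_OSub (hs : ∀ i j, B i j = B j i) {U : Submodule (ZMod p) (V n p)}
    {a : V n p} (ha : form n p B a a ≠ 0) (haU : a ∈ U) : reflection a ha ∈ OSub n p B U := by
  have hmaps : ∀ x ∈ U, (reflection a ha).1 x ∈ U := fun x hx => by
    rw [reflection_apply]
    exact U.sub_mem hx (U.smul_mem _ haU)
  refine ⟨reflection_mem_OV hs ha, map_eq_of_forall_mem hmaps ?_, fun u hu => ?_⟩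
  · rwa [reflection_inv]
  · exact reflection_apply_of_form_eq_zero ha (hu a haU)

end Reflection

section Generators

variable {n p : ℕ} [Fact p.Prime] {B : Matrix (Fin n) (Fin n) ℚ}

lemma ringChar_zmod_ne_two (hodd : p ≠ 2) : ringChar (ZMod p) ≠ 2 := by
  rwa [ZMod.ringChar_zmod_n]

lemma two_ne_zero_zmod (hodd : p ≠ 2) : (2 : ZMod p) ≠ 0 :=
  Ring.two_ne_zero (ringChar_zmod_ne_two hodd)

lemma exists_nonsquare_zmod (hodd : p ≠ 2) : ∃ u : ZMod p, ¬ IsSquare u :=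
  FiniteField.exists_nonsquare (ringChar_zmod_ne_two hodd)

lemma redQ_cartan (hB : GramOK n B) (hint : PIntegral n p B) (i j : Fin n) :
    ∃ c : ℤ, 2 * B i j / B i i = c ∧ redQ p (B i j) * (2 : ℤ) = c * redQ p (B i i) := by
  obtain ⟨c, hc⟩ := hB.2.2.2.1 i j
  obtain ⟨m, hm, hBii⟩ := hB.2.2.1 i
  have hBii0 : B i i ≠ 0 := by rw [hBii]; exact_mod_cast hm.ne'
  refine ⟨c, hc, redQ_mul_intCast_eq (hint i j) (hint i i) ?_⟩
  rw [div_eq_iff hBii0] at hc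
  push_cast
  linarith

/-- A node label divisible by `p` would make the whole row of `B` vanish mod `p`, since the
Cartan integers are integral. -/
lemma redQ_diag_ne_zero (hB : GramOK n B) (hint : PIntegral n p B) (hV : Nonsing n p B ⊤)
    (hodd : p ≠ 2) (i : Fin n) : redQ p (B i i) ≠ 0 := by
  intro h0
  have hrow : ∀ j, redQ p (B i j) = 0 := fun j => by
    obtain ⟨c, -, hred⟩ := redQ_cartan hB hint i j
    rw [h0, mul_zero] at hred
    exact (mul_eq_zero.mp hred).resolve_right (by exact_mod_cast two_ne_zero_zmod hodd)
  have hb : basisVec n p i = 0 :=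
    hV _ Submodule.mem_top fun y _ => by
      simp [← bform_apply, bform, Matrix.toBilin'_apply', basisVec, Matrix.mulVec, hrow]
  simpa [basisVec] using congrFun hb i

lemma form_basisVec_self_ne_zero (hB : GramOK n B) (hint : PIntegral n p B)
    (hV : Nonsing n p B ⊤) (hodd : p ≠ 2) (i : Fin n) :
    form n p B (basisVec n p i) (basisVec n p i) ≠ 0 := by
  rw [form_basisVec_basisVec]
  exact redQ_diag_ne_zero hB hint hV hodd i

lemma r_eq_reflection (hB : GramOK n B) (hint : PIntegral n p B) (hV : Nonsing n p B ⊤)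
    (hodd : p ≠ 2) {r : Fin n → GLV n p} (hr : ReflHyp n p B r) (i : Fin n) :
    r i = reflection (basisVec n p i) (form_basisVec_self_ne_zero hB hint hV hodd i) := by
  refine Units.ext ((Pi.basisFun (ZMod p) (Fin n)).ext fun j => ?_)
  obtain ⟨c, hc, hred⟩ := redQ_cartan hB hint i j
  have hcoef : (c : ZMod p) = 2 * redQ p (B i j) * (redQ p (B i i))⁻¹ := by
    rw [eq_mul_inv_iff_mul_eq₀ (redQ_diag_ne_zero hB hint hV hodd i)]
    push_cast at hred
    linear_combination -hred
  rw [Pi.basisFun_apply]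
  change (r i).1 (basisVec n p j) = (reflection _ _).1 (basisVec n p j)
  rw [reflection_apply, form_basisVec_basisVec, form_basisVec_basisVec, hB.1 j i,
    ← hcoef, ← redQ_intCast, ← hc]
  exact hr i j

lemma closure_image_le_OSub (hB : GramOK n B) (hint : PIntegral n p B) (hV : Nonsing n p B ⊤)
    (hodd : p ≠ 2) {r : Fin n → GLV n p} (hr : ReflHyp n p B r) (T : Set (Fin n)) :
    Subgroup.closure (r '' T) ≤ OSub n p B (spanV n p T) := by
  rw [Subgroup.closure_le]
  rintro _ ⟨i, hi, rfl⟩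
  rw [r_eq_reflection hB hint hV hodd hr i]
  exact reflection_mem_OSub hB.1 _ (Submodule.subset_span (Set.mem_image_of_mem _ hi))

end Generators

section Orthogonal

variable {n p : ℕ} [Fact p.Prime] {B : Matrix (Fin n) (Fin n) ℚ}

lemma mem_spanV {S : Set (Fin n)} {x : V n p} : x ∈ spanV n p S ↔ ∀ i ∉ S, x i = 0 := by
  have hb : basisVec n p = Pi.basisFun (ZMod p) (Fin n) := funext fun i => by
    rw [Pi.basisFun_apply]; rfl
  rw [spanV, hb, Module.Basis.mem_span_image]
  simp only [Set.subset_def, Finset.mem_coe, Finsupp.mem_support_iff, Pi.basisFun_repr]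
  exact forall_congr' fun i => not_imp_comm

lemma spanV_inter (S T : Set (Fin n)) :
    spanV n p (S ∩ T) = spanV n p S ⊓ spanV n p T := by
  ext x
  simp only [Submodule.mem_inf, mem_spanV, Set.mem_inter_iff, not_and_or]
  exact ⟨fun h => ⟨fun i hi => h i (.inl hi), fun i hi => h i (.inr hi)⟩,
    fun h i => Or.rec (h.1 i) (h.2 i)⟩

lemma perpFix_iff (hs : ∀ i j, B i j = B j i) {W : Submodule (ZMod p) (V n p)} {g : GLV n p} :
    perpFix n p B W g ↔ ∀ u ∈ (bform B).orthogonal W, g.1 u = u := by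
  simp only [perpFix, LinearMap.BilinForm.mem_orthogonal_iff, bform_apply, form_comm hs _]

lemma nonsing_iff_disjoint (hs : ∀ i j, B i j = B j i) {W : Submodule (ZMod p) (V n p)} :
    Nonsing n p B W ↔ Disjoint W ((bform B).orthogonal W) := by
  simp only [Nonsing, Submodule.disjoint_def, LinearMap.BilinForm.mem_orthogonal_iff,
    bform_apply, form_comm hs _]

lemma isCompl_orthogonal (hs : ∀ i j, B i j = B j i) {W : Submodule (ZMod p) (V n p)}
    (hW : Nonsing n p B W) : IsCompl W ((bform B).orthogonal W) :=
  (LinearMap.BilinForm.isCompl_orthogonal_iff_disjoint (bform_isSymm hs).isRefl).mpr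
    ((nonsing_iff_disjoint hs).mp hW)

lemma orthogonal_inf (hs : ∀ i j, B i j = B j i) (hV : Nonsing n p B ⊤)
    (U U' : Submodule (ZMod p) (V n p)) :
    (bform B).orthogonal (U ⊓ U') = (bform B).orthogonal U ⊔ (bform B).orthogonal U' := by
  have hnd := bform_nondegenerate hs hV
  have hrefl := (bform_isSymm (p := p) hs).isRefl
  have horth_sup : ∀ X Y : Submodule (ZMod p) (V n p),
      (bform (p := p) B).orthogonal (X ⊔ Y) = (bform B).orthogonal X ⊓ (bform B).orthogonal Y :=
    fun X Y => le_antisymm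
      (le_inf (LinearMap.BilinForm.orthogonal_le le_sup_left)
        (LinearMap.BilinForm.orthogonal_le le_sup_right))
      fun x ⟨hX, hY⟩ z hz => by
        obtain ⟨a, ha, b, hb, rfl⟩ := Submodule.mem_sup.mp hz
        rw [LinearMap.BilinForm.add_left, hX a ha, hY b hb, add_zero]
  conv_lhs => rw [← LinearMap.BilinForm.orthogonal_orthogonal hnd hrefl U,
    ← LinearMap.BilinForm.orthogonal_orthogonal hnd hrefl U', ← horth_sup,
    LinearMap.BilinForm.orthogonal_orthogonal hnd hrefl]

lemma OSub_inf_le (hs : ∀ i j, B i j = B j i) (hV : Nonsing n p B ⊤)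
    (U U' : Submodule (ZMod p) (V n p)) :
    OSub n p B U ⊓ OSub n p B U' ≤ OSub n p B (U ⊓ U') := by
  rintro g ⟨⟨hgO, hgU, hgfix⟩, -, hgU', hgfix'⟩
  refine ⟨hgO, ?_, ?_⟩
  · have hinj : Function.Injective g.1 :=
      (LinearMap.GeneralLinearGroup.generalLinearEquiv _ _ g).injective
    rw [Submodule.map_inf _ hinj, hgU, hgU']
  · rw [perpFix_iff hs, orthogonal_inf hs hV] at *
    intro u hu
    obtain ⟨a, ha, b, hb, rfl⟩ := Submodule.mem_sup.mp hu
    rw [map_add, hgfix a ha, hgfix' b hb]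

lemma eq_of_eqOn_of_perpFix (hs : ∀ i j, B i j = B j i) {W : Submodule (ZMod p) (V n p)}
    (hW : Nonsing n p B W) {g e : GLV n p} (hg : perpFix n p B W g) (he : perpFix n p B W e)
    (h : ∀ x ∈ W, g.1 x = e.1 x) : g = e := by
  rw [perpFix_iff hs] at hg he
  refine Units.ext (LinearMap.ext fun x => ?_)
  obtain ⟨a, ha, b, hb, rfl⟩ :=
    Submodule.mem_sup.mp ((isCompl_orthogonal hs hW).sup_eq_top ▸ Submodule.mem_top (x := x))
  rw [map_add, map_add, h a ha, hg b hb, he b hb]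

end Orthogonal

section SphereSign

variable {n p : ℕ} [Fact p.Prime] {B : Matrix (Fin n) (Fin n) ℚ}

lemma neg_one_mem_OV : (-1 : GLV n p) ∈ OV n p B := fun x y => by
  change form n p B (-x) (-y) = form n p B x y
  rw [← neg_one_smul (ZMod p) x, ← neg_one_smul (ZMod p) y, form_smul_left, form_smul_right]
  ring

variable (B) in
def sphere (c : ZMod p) : SubMulAction (OV n p B) (V n p) where
  carrier := {x | form n p B x x = c}
  smul_mem' g x hx := (g.2 x x).trans hx

noncomputable instance (c : ZMod p) : Fintype (sphere B c) := Fintype.ofFinite _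

variable (B) in
def spherePerm (c : ZMod p) : OV n p B →* Equiv.Perm (sphere B c) :=
  MulAction.toPermHom (OV n p B) (sphere B c)

open Classical in
variable (B) in
/-- Stands in for the spinor norm: on reflections it reads off the square class of the root
norm (`sphereSign_reflection`). -/
noncomputable def sphereSign (c : ZMod p) : OV n p B →* ℤˣ :=
  Equiv.Perm.sign.comp (spherePerm B c)

variable (B) in
noncomputable def sphereKer (c : ZMod p) : Subgroup (GLV n p) :=
  (sphereSign B c).ker.map (OV n p B).subtype

lemma neg_reflection_apply_eq_self_iff {a : V n p} (ha : form n p B a a ≠ 0) (hodd : p ≠ 2)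
    (x : V n p) :
    -(reflection a ha).1 x = x ↔ x = (form n p B x a * (form n p B a a)⁻¹) • a := by
  rw [reflection_apply, neg_sub, sub_eq_iff_eq_add]
  constructor
  · intro h
    refine smul_right_injective (V n p) (two_ne_zero_zmod hodd) ?_
    simp only [← h, two_smul, smul_smul]
    ring_nf
  · intro h
    rw [h, form_smul_left, ← add_smul]
    congr 1
    field_simp
    ring

def negReflection (hs : ∀ i j, B i j = B j i) {a : V n p} (ha : form n p B a a ≠ 0) :
    OV n p B :=
  ⟨-1, neg_one_mem_OV⟩ * ⟨reflection a ha, reflection_mem_OV hs ha⟩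

lemma spherePerm_negReflection_apply (hs : ∀ i j, B i j = B j i) {a : V n p}
    (ha : form n p B a a ≠ 0) {c : ZMod p} (x : sphere B c) :
    (spherePerm B c (negReflection hs ha) x : V n p) = -(reflection a ha).1 x :=
  rfl

/-- The fixed points of `-r_a` on the sphere of norm `c` are the multiples `t • a` of norm `c`,
so they correspond to the square roots `t · a·a` of `c · a·a`. -/
lemma card_fixedPoints_negReflection (hs : ∀ i j, B i j = B j i) (hodd : p ≠ 2) {a : V n p}
    (ha : form n p B a a ≠ 0) (c : ZMod p) :
    (Nat.card (Function.fixedPoints (spherePerm B c (negReflection hs ha))) : ℤ) =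
      quadraticChar (ZMod p) (c * form n p B a a) + 1 := by
  classical
  have hfix : ∀ x : sphere B c, spherePerm B c (negReflection hs ha) x = x ↔
      (x : V n p) = (form n p B x a * (form n p B a a)⁻¹) • a := fun x => by
    rw [← neg_reflection_apply_eq_self_iff ha hodd, ← spherePerm_negReflection_apply hs ha,
      SetLike.coe_eq_coe]
  have hnorm : ∀ t : ZMod p, form n p B (t • a) (t • a) = t ^ 2 * form n p B a a := fun t => by
    rw [form_smul_left, form_smul_right]; ring
  let e : Function.fixedPoints (spherePerm B c (negReflection hs ha)) ≃
      {y : ZMod p // y ^ 2 = c * form n p B a a} :=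
    { toFun x := ⟨form n p B x.1 a, by
        have hx := (hfix x.1).mp x.2
        have hc : form n p B x.1 x.1 = c := x.1.2
        rw [hx, hnorm] at hc
        field_simp at hc
        linear_combination hc⟩
      invFun y := ⟨⟨(y.1 * (form n p B a a)⁻¹) • a, by
          change form n p B _ _ = c
          rw [hnorm, mul_pow, y.2]; field_simp⟩, by
        refine (hfix _).mpr ?_
        simp only [form_smul_left]
        field_simp⟩
      left_inv x := Subtype.ext (Subtype.ext ((hfix x.1).mp x.2).symm)
      right_inv y := Subtype.ext (by simp only [form_smul_left]; field_simp) }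
  rw [Nat.card_congr e, ← quadraticChar_card_sqrts (ringChar_zmod_ne_two hodd),
    Set.toFinset_card, Nat.card_eq_fintype_card]
  rfl

lemma spherePerm_neg_one_apply_ne (hodd : p ≠ 2) {c : ZMod p} (hc : c ≠ 0) (x : sphere B c) :
    spherePerm B c ⟨-1, neg_one_mem_OV⟩ x ≠ x := fun h => by
  have hneg : -(x : V n p) = x := congrArg Subtype.val h
  have hx : (x : V n p) = 0 := by
    refine smul_right_injective (V n p) (two_ne_zero_zmod hodd) ?_
    change (2 : ZMod p) • (x : V n p) = (2 : ZMod p) • 0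
    rw [two_smul, smul_zero]
    nth_rewrite 1 [← hneg]
    exact neg_add_cancel _
  apply hc
  rw [← x.2, hx, ← zero_smul (ZMod p) (0 : V n p), form_smul_left, zero_mul]

/-- `r_a = (-1) · (-r_a)` is a product of two involutions of the sphere, the first one
fixed-point free and the second one with `1 + χ(c · a·a)` fixed points. -/
theorem sphereSign_reflection (hs : ∀ i j, B i j = B j i) (hodd : p ≠ 2) {a : V n p}
    (ha : form n p B a a ≠ 0) {c : ZMod p} (hc : c ≠ 0) :
    (sphereSign B c ⟨reflection a ha, reflection_mem_OV hs ha⟩ : ℤ) =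
      -quadraticChar (ZMod p) (c * form n p B a a) := by
  classical
  let ν : OV n p B := ⟨-1, neg_one_mem_OV⟩
  have hνν : ν * ν = 1 := Subtype.ext (show (-1 : GLV n p) * -1 = 1 by ext; simp)
  have hsplit : (⟨reflection a ha, reflection_mem_OV hs ha⟩ : OV n p B) =
      ν * negReflection hs ha := by
    rw [negReflection, ← mul_assoc, hνν, one_mul]
  have hneg_sq : negReflection hs ha ^ 2 = 1 := by
    refine Subtype.ext (show (-1 * reflection a ha) * (-1 * reflection a ha) = 1 from ?_)
    refine Units.ext (LinearMap.ext fun x => ?_)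
    simpa using congrArg (fun g : GLV n p => g.1 x) (reflection_mul_self ha)
  have hsign_ν := Equiv.Perm.sign_of_pow_two_eq_one (σ := spherePerm B c ν)
    (by rw [← map_pow, sq, hνν, map_one])
  have hsign_neg := Equiv.Perm.sign_of_pow_two_eq_one (σ := spherePerm B c (negReflection hs ha))
    (by rw [← map_pow, hneg_sq, map_one])
  have hνfix : Fintype.card (Function.fixedPoints (spherePerm B c ν)) = 0 :=
    Fintype.card_eq_zero_iff.mpr ⟨fun x => spherePerm_neg_one_apply_ne hodd hc x.1 x.2⟩
  have hF : (Fintype.card (Function.fixedPoints (spherePerm B c (negReflection hs ha))) : ℤ) =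
      quadraticChar (ZMod p) (c * form n p B a a) + 1 := by
    rw [← Nat.card_eq_fintype_card]
    exact card_fixedPoints_negReflection hs hodd ha c
  have hFN :=
    set_fintype_card_le_univ (Function.fixedPoints (spherePerm B c (negReflection hs ha)))
  rw [sphereSign, MonoidHom.comp_apply, hsplit, map_mul, map_mul, hsign_ν, hsign_neg, hνfix,
    Nat.sub_zero, ← pow_add]
  rcases quadraticChar_dichotomy (mul_ne_zero hc ha) with hχ | hχ <;> rw [hχ] at hF ⊢
  · rw [Odd.neg_one_pow ⟨Fintype.card (sphere B c) / 2 - 1, by omega⟩]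
    rfl
  · rw [Even.neg_one_pow ⟨Fintype.card (sphere B c) / 2, by omega⟩]
    rfl

lemma mem_sphereKer {c : ZMod p} {g : GLV n p} :
    g ∈ sphereKer B c ↔ ∃ hg : g ∈ OV n p B, sphereSign B c ⟨g, hg⟩ = 1 := by
  simp [sphereKer, MonoidHom.mem_ker]

lemma reflection_mem_sphereKer_iff (hs : ∀ i j, B i j = B j i) (hodd : p ≠ 2) {a : V n p}
    (ha : form n p B a a ≠ 0) {c : ZMod p} (hc : c ≠ 0) :
    reflection a ha ∈ sphereKer B c ↔ quadraticChar (ZMod p) (c * form n p B a a) = -1 := by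
  rw [mem_sphereKer, exists_prop_of_true (reflection_mem_OV hs ha), ← Units.val_eq_one,
    sphereSign_reflection hs hodd ha hc, neg_eq_iff_eq_neg]

lemma O1_le_sphereKer (hs : ∀ i j, B i j = B j i) (hodd : p ≠ 2) {c : ZMod p}
    (hc : ¬ IsSquare c) (W : Submodule (ZMod p) (V n p)) : O1 n p B W ≤ sphereKer B c := by
  have hc0 : c ≠ 0 := fun h => hc (h ▸ IsSquare.zero)
  rw [O1, Subgroup.closure_le]
  rintro g ⟨a, -, ⟨t, ht, hat⟩, hg⟩
  have ha : form n p B a a ≠ 0 := hat ▸ pow_ne_zero 2 ht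
  rw [SetLike.mem_coe, eq_reflection ha hg, reflection_mem_sphereKer_iff hs hodd ha hc0, hat,
    map_mul, quadraticChar_sq_one' ht, mul_one, quadraticChar_neg_one_iff_not_isSquare]
  exact hc

lemma O2_le_sphereKer_one (hs : ∀ i j, B i j = B j i) (hodd : p ≠ 2)
    (W : Submodule (ZMod p) (V n p)) : O2 n p B W ≤ sphereKer B 1 := by
  rw [O2, Subgroup.closure_le]
  rintro g ⟨a, -, hsq, hg⟩
  have ha : form n p B a a ≠ 0 := fun h => hsq 0 (by rw [h]; ring)
  rw [SetLike.mem_coe, eq_reflection ha hg, reflection_mem_sphereKer_iff hs hodd ha one_ne_zero,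
    one_mul, quadraticChar_neg_one_iff_not_isSquare]
  rintro ⟨t, ht⟩
  exact hsq t (by rw [ht, sq])

lemma r_not_mem_O2 (hB : GramOK n B) (hint : PIntegral n p B) (hV : Nonsing n p B ⊤)
    (hodd : p ≠ 2) {r : Fin n → GLV n p} (hr : ReflHyp n p B r) {i : Fin n} {t : ZMod p}
    (ht : t ≠ 0) (hti : redQ p (B i i) = t ^ 2) (W : Submodule (ZMod p) (V n p)) :
    r i ∉ O2 n p B W := fun hri => by
  have hK := O2_le_sphereKer_one hB.1 hodd W hri
  rw [r_eq_reflection hB hint hV hodd hr, reflection_mem_sphereKer_iff hB.1 hodd _ one_ne_zero,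
    one_mul, form_basisVec_basisVec, hti, quadraticChar_sq_one' ht] at hK
  norm_num at hK

end SphereSign

lemma mem_or_mul_mem_of_mem_closure_insert {G : Type*} [Group G] {D : Subgroup G} {s : G}
    (hsD : s ∈ Subgroup.normalizer (D : Set G)) (hs : s * s = 1) {e : G}
    (he : e ∈ Subgroup.closure (insert s (D : Set G))) : e ∈ D ∨ s * e ∈ D := by
  have hsinv : s⁻¹ = s := inv_eq_of_mul_eq_one_right hs
  induction he using Subgroup.closure_induction'' with
  | mem x hx =>
    rcases hx with rfl | hx
    exacts [.inr (hs ▸ D.one_mem), .inl hx]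
  | inv_mem x hx =>
    rcases hx with rfl | hx
    exacts [.inr (by rw [hsinv, hs]; exact D.one_mem), .inl (D.inv_mem hx)]
  | one => exact .inl D.one_mem
  | mul x y _ _ hx hy =>
    rcases hx with hx | hx <;> rcases hy with hy | hy
    · exact .inl (D.mul_mem hx hy)
    · refine .inr ?_
      rw [show s * (x * y) = s * x * s⁻¹ * (s * y) by group]
      exact D.mul_mem ((Subgroup.mem_normalizer_iff.mp hsD x).mp hx) hy
    · exact .inr (mul_assoc s x y ▸ D.mul_mem hx hy)
    · refine .inl ?_
      rw [show x * y = s * (s * x) * s⁻¹ * (s * y) by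
        simp only [hsinv, ← mul_assoc, hs, one_mul]
        rw [mul_assoc x s s, hs, mul_one]]
      exact D.mul_mem ((Subgroup.mem_normalizer_iff.mp hsD _).mp hx) hy

section Normalizer

variable {n p : ℕ} [Fact p.Prime] {B : Matrix (Fin n) (Fin n) ℚ}

lemma conj_reflection {g : GLV n p} (hg : g ∈ OV n p B) {a : V n p}
    (ha : form n p B a a ≠ 0) :
    g * reflection a ha * g⁻¹ = reflection (g.1 a) (by rwa [hg]) := by
  refine eq_reflection _ fun y => ?_
  have hy : g.1 ((g⁻¹).1 y) = y := by
    rw [← Module.End.mul_apply, ← Units.val_mul, mul_inv_cancel, Units.val_one,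
      Module.End.one_apply]
  have hform : form n p B ((g⁻¹).1 y) a = form n p B y (g.1 a) := by
    rw [← hg, hy]
  simp only [Units.val_mul, Module.End.mul_apply, reflection_apply, map_sub, map_smul, hy,
    hform, hg a a]

lemma OSub_le_normalizer_O1 (W : Submodule (ZMod p) (V n p)) :
    OSub n p B W ≤ Subgroup.normalizer (O1 n p B W : Set (GLV n p)) := by
  have hconj : ∀ g ∈ OSub n p B W, ∀ h ∈ O1 n p B W, g * h * g⁻¹ ∈ O1 n p B W := by
    rintro g ⟨hgO, hgW, -⟩ h hh
    suffices O1 n p B W ≤ (O1 n p B W).comap (MulAut.conj g).toMonoidHom from this hh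
    rw [O1, Subgroup.closure_le]
    rintro x ⟨a, haW, ⟨t, ht, hat⟩, hx⟩
    have ha : form n p B a a ≠ 0 := hat ▸ pow_ne_zero 2 ht
    refine Subgroup.subset_closure ⟨g.1 a, hgW ▸ Submodule.mem_map_of_mem haW,
      ⟨t, ht, by rw [hgO, hat]⟩, fun y => ?_⟩
    simp only [MulEquiv.coe_toMonoidHom, MulAut.conj_apply, eq_reflection ha hx,
      conj_reflection hgO ha, reflection_apply]
  intro g hg
  refine Subgroup.mem_normalizer_iff.mpr fun h => ⟨hconj g hg h, fun hh => ?_⟩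
  simpa [mul_assoc] using hconj g⁻¹ ((OSub n p B W).inv_mem hg) _ hh

end Normalizer

section Singular

variable {n p : ℕ} [Fact p.Prime] {B : Matrix (Fin n) (Fin n) ℚ}

lemma apply_mem_of_mem_OSub {W : Submodule (ZMod p) (V n p)} {g : GLV n p}
    (hg : g ∈ OSub n p B W) {x : V n p} (hx : x ∈ W) : g.1 x ∈ W :=
  hg.2.1 ▸ Submodule.mem_map_of_mem hx

lemma spanV_insert (k : Fin n) (S : Set (Fin n)) :
    spanV n p (insert k S) = (ZMod p) ∙ basisVec n p k ⊔ spanV n p S := by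
  rw [spanV, Set.image_insert_eq, Submodule.span_insert, spanV]

/-- A nonzero radical vector `l` of `V_{S ∪ {k}}` lies outside the nonsingular `V_S`, so
`V_{S ∪ {k}} = V_S ⊕ ⟨l⟩` and `b_k` splits along this sum. -/
lemma exists_basisVec_eq_add {S : Set (Fin n)} {k : Fin n}
    (hW : Nonsing n p B (spanV n p S)) {l : V n p} (hlU : l ∈ spanV n p (insert k S))
    (hl0 : l ≠ 0) (hlperp : ∀ v ∈ spanV n p (insert k S), form n p B l v = 0) :
    ∃ w ∈ spanV n p S, ∃ t : ZMod p, basisVec n p k = w + t • l := by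
  rw [spanV_insert] at hlU
  obtain ⟨_, hc, w', hw', rfl⟩ := Submodule.mem_sup.mp hlU
  obtain ⟨c, rfl⟩ := Submodule.mem_span_singleton.mp hc
  have hc0 : c ≠ 0 := by
    rintro rfl
    rw [zero_smul, zero_add] at hl0 hlperp
    refine hl0 (hW w' hw' fun y hy => hlperp y ?_)
    rw [spanV_insert]
    exact Submodule.mem_sup_right hy
  refine ⟨-(c⁻¹ • w'), (spanV n p S).neg_mem ((spanV n p S).smul_mem _ hw'), c⁻¹, ?_⟩
  rw [smul_add, smul_smul, inv_mul_cancel₀ hc0, one_smul]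
  abel

lemma form_self_eq_of_eq_add_smul (hs : ∀ i j, B i j = B j i) {U : Submodule (ZMod p) (V n p)}
    {l : V n p} (hlperp : ∀ v ∈ U, form n p B l v = 0) {b w : V n p} (hbU : b ∈ U) (hwU : w ∈ U)
    {t : ZMod p} (hb : b = w + t • l) : form n p B b b = form n p B w w := by
  have hperp : ∀ x ∈ U, form n p B x b = form n p B x w := fun x hx => by
    rw [hb, form_add_right, form_smul_right, form_comm hs x l, hlperp x hx, mul_zero, add_zero]
  rw [hperp b hbU, form_comm hs, hperp w hwU]

lemma closure_insert_reflection_le_OSub (hB : GramOK n B) (hint : PIntegral n p B)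
    (hV : Nonsing n p B ⊤) (hodd : p ≠ 2) {r : Fin n → GLV n p} (hr : ReflHyp n p B r)
    {S : Set (Fin n)} {w : V n p} (hwW : w ∈ spanV n p S) (hw : form n p B w w ≠ 0) :
    Subgroup.closure (insert (reflection w hw) (r '' S)) ≤ OSub n p B (spanV n p S) := by
  rw [Subgroup.closure_le, Set.insert_subset_iff]
  exact ⟨reflection_mem_OSub hB.1 hw hwW,
    Subgroup.subset_closure.trans (closure_image_le_OSub hB hint hV hodd hr S)⟩

/-- Modulo the radical `⟨l⟩` of `V_{S ∪ {k}}`, the generator `r_k` acts on `V_S` as the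
reflection in the component `w` of `b_k = w + t l`. -/
lemma exists_sub_mem_span_of_mem_closure (hB : GramOK n B) (hint : PIntegral n p B)
    (hV : Nonsing n p B ⊤) (hodd : p ≠ 2) {r : Fin n → GLV n p} (hr : ReflHyp n p B r)
    {S : Set (Fin n)} {k : Fin n} {l : V n p} (hlU : l ∈ spanV n p (insert k S))
    (hlperp : ∀ v ∈ spanV n p (insert k S), form n p B l v = 0)
    {w : V n p} (hwW : w ∈ spanV n p S) {t : ZMod p} (hbk : basisVec n p k = w + t • l)
    (hw : form n p B w w ≠ 0) {g : GLV n p} (hg : g ∈ Subgroup.closure (r '' insert k S)) :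
    ∃ e ∈ Subgroup.closure (insert (reflection w hw) (r '' S)),
      ∀ x ∈ spanV n p S, g.1 x - e.1 x ∈ (ZMod p) ∙ l := by
  set W := spanV n p S
  set E := Subgroup.closure (insert (reflection w hw) (r '' S))
  have hWU : W ≤ spanV n p (insert k S) :=
    Submodule.span_mono (Set.image_mono (Set.subset_insert k S))
  have hE : E ≤ OSub n p B W := closure_insert_reflection_le_OSub hB hint hV hodd hr hwW hw
  have hgen : ∀ i ∈ insert k S, ∃ e ∈ E, ∀ x ∈ W, (r i).1 x - e.1 x ∈ (ZMod p) ∙ l := by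
    rintro i (rfl | hi)
    · refine ⟨reflection w hw, Subgroup.subset_closure (Set.mem_insert _ _), fun x hx => ?_⟩
      have hxb : form n p B x (basisVec n p i) = form n p B x w := by
        rw [hbk, form_add_right, form_smul_right, form_comm hB.1 x l, hlperp x (hWU hx),
          mul_zero, add_zero]
      have hbb := form_self_eq_of_eq_add_smul hB.1 hlperp
        (Submodule.subset_span (Set.mem_image_of_mem _ (Set.mem_insert i S))) (hWU hwW) hbk
      rw [r_eq_reflection hB hint hV hodd hr, reflection_apply, reflection_apply, hxb, hbb, hbk]
      refine Submodule.mem_span_singleton.mpr ⟨-(2 * form n p B x w * (form n p B w w)⁻¹ * t), ?_⟩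
      module
    · exact ⟨r i, Subgroup.subset_closure (Set.mem_insert_of_mem _ ⟨i, hi, rfl⟩), fun x _ => by
        rw [sub_self]; exact Submodule.zero_mem _⟩
  have hfixl : ∀ y ∈ Subgroup.closure (r '' insert k S), ∀ x ∈ (ZMod p) ∙ l, y.1 x = x := by
    intro y hy x hx
    obtain ⟨c, rfl⟩ := Submodule.mem_span_singleton.mp hx
    rw [map_smul, (closure_image_le_OSub hB hint hV hodd hr _ hy).2.2 l hlperp]
  induction hg using Subgroup.closure_induction'' with
  | mem _ hx =>
    obtain ⟨i, hi, rfl⟩ := hx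
    exact hgen i hi
  | inv_mem _ hx =>
    obtain ⟨i, hi, rfl⟩ := hx
    rw [r_eq_reflection hB hint hV hodd hr, reflection_inv, ← r_eq_reflection hB hint hV hodd hr]
    exact hgen i hi
  | one => exact ⟨1, E.one_mem, fun x _ => by simp⟩
  | mul a b ha _ iha ihb =>
    obtain ⟨ea, hea, ha'⟩ := iha
    obtain ⟨eb, heb, hb'⟩ := ihb
    refine ⟨ea * eb, E.mul_mem hea heb, fun x hx => ?_⟩
    have hsplit : (a * b).1 x - (ea * eb).1 x =
        (a.1 (eb.1 x) - ea.1 (eb.1 x)) + a.1 (b.1 x - eb.1 x) := by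
      simp only [Units.val_mul, Module.End.mul_apply, map_sub]
      abel
    rw [hsplit, hfixl a ha _ (hb' x hx)]
    exact add_mem (ha' _ (apply_mem_of_mem_OSub (hE heb) hx)) (hb' x hx)

/-- `g` coincides with an element of `⟨r_w, O₁(V_S)⟩ = O₁(V_S) ∪ r_w O₁(V_S)`; when `w·w` is a
nonsquare, the sign on a sphere of nonsquare norm rules out the coset `r_w O₁(V_S)`. -/
theorem mem_closure_of_mem_OSub_of_not_nonsing (hB : GramOK n B) (hint : PIntegral n p B)
    (hV : Nonsing n p B ⊤) (hodd : p ≠ 2) {r : Fin n → GLV n p} (hr : ReflHyp n p B r)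
    {S : Set (Fin n)} {k : Fin n} (hW : Nonsing n p B (spanV n p S))
    (hU : ¬ Nonsing n p B (spanV n p (insert k S)))
    (hD : Subgroup.closure (r '' S) = O1 n p B (spanV n p S))
    (hG : Subgroup.closure (Set.range r) = O1 n p B ⊤)
    {g : GLV n p} (hg : g ∈ Subgroup.closure (r '' insert k S))
    (hgW : g ∈ OSub n p B (spanV n p S)) :
    g ∈ Subgroup.closure (r '' S) := by
  simp only [Nonsing, not_forall] at hU
  obtain ⟨l, hlU, hlperp, hl0⟩ := hU
  obtain ⟨w, hwW, t, hbk⟩ := exists_basisVec_eq_add hW hlU hl0 hlperp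
  have hWU : spanV n p S ≤ spanV n p (insert k S) :=
    Submodule.span_mono (Set.image_mono (Set.subset_insert k S))
  have hw : form n p B w w ≠ 0 := by
    rw [← form_self_eq_of_eq_add_smul hB.1 hlperp
      (Submodule.subset_span (Set.mem_image_of_mem _ (Set.mem_insert k S))) (hWU hwW) hbk]
    exact form_basisVec_self_ne_zero hB hint hV hodd k
  set s := reflection w hw
  set D := Subgroup.closure (r '' S)
  obtain ⟨e, he, hge⟩ :=
    exists_sub_mem_span_of_mem_closure hB hint hV hodd hr hlU hlperp hwW hbk hw hg
  have heW := closure_insert_reflection_le_OSub hB hint hV hodd hr hwW hw he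
  have hg_eq : g = e := by
    refine eq_of_eqOn_of_perpFix hB.1 hW hgW.2.2 heW.2.2 fun x hx => sub_eq_zero.mp ?_
    obtain ⟨c, hc⟩ := Submodule.mem_span_singleton.mp (hge x hx)
    rw [← hc]
    refine hW _ (hc ▸ sub_mem (apply_mem_of_mem_OSub hgW hx) (apply_mem_of_mem_OSub heW hx))
      fun y hy => ?_
    rw [form_smul_left, hlperp y (hWU hy), mul_zero]
  have hsD : s ∈ Subgroup.normalizer (D : Set (GLV n p)) := by
    rw [hD]
    exact OSub_le_normalizer_O1 _ (reflection_mem_OSub hB.1 hw hwW)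
  rcases mem_or_mul_mem_of_mem_closure_insert hsD (reflection_mul_self hw)
    (Subgroup.closure_mono (Set.insert_subset_insert Subgroup.subset_closure) he) with h | h
  · exact hg_eq ▸ h
  by_cases hsq : IsSquare (form n p B w w)
  · obtain ⟨t', ht'⟩ := hsq
    have hs_mem : s ∈ D := by
      rw [hD]
      refine Subgroup.subset_closure ⟨w, hwW, ⟨t', ?_, by rw [ht', sq]⟩, reflection_apply hw⟩
      rintro rfl
      exact hw (by rw [ht', mul_zero])
    simpa [hg_eq] using D.mul_mem (D.inv_mem hs_mem) h
  · exfalso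
    obtain ⟨u, hu⟩ := exists_nonsquare_zmod hodd
    have hgK : g ∈ sphereKer B u := O1_le_sphereKer hB.1 hodd hu ⊤
      (hG ▸ Subgroup.closure_mono (Set.image_subset_range r _) hg)
    have hseK : s * e ∈ sphereKer B u := O1_le_sphereKer hB.1 hodd hu _ (hD ▸ h)
    have hsK : s ∈ sphereKer B u := by
      simpa [hg_eq] using (sphereKer B u).mul_mem hseK ((sphereKer B u).inv_mem hgK)
    have hu0 : u ≠ 0 := fun h0 => hu (h0 ▸ IsSquare.zero)
    rw [reflection_mem_sphereKer_iff hB.1 hodd hw hu0, map_mul,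
      quadraticChar_neg_one_iff_not_isSquare.mpr hu,
      quadraticChar_neg_one_iff_not_isSquare.mpr hsq] at hsK
    norm_num at hsK

end Singular

theorem statement6_general
    (n p : ℕ) (hn : 3 ≤ n) (hp : p.Prime) (hodd : p ≠ 2)
    (B : Matrix (Fin n) (Fin n) ℚ)
    (hB : GramOK n B) (hint : PIntegral n p B)
    (r : Fin n → GLV n p) (hr : ReflHyp n p B r)
    (hsq : ∃ i : Fin n, 1 ≤ (i : ℕ) ∧ (i : ℕ) ≤ n - 2 ∧
      ∃ t : ZMod p, t ≠ 0 ∧ redQ p (B i i) = t ^ 2)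
    (hV : Nonsing n p B ⊤)
    (hV0n1 : Nonsing n p B (spanV n p {i : Fin n | (i : ℕ) ≠ 0 ∧ (i : ℕ) ≠ n - 1}))
    (hsing : ¬ Nonsing n p B (spanV n p {i : Fin n | (i : ℕ) ≠ 0}) ∨ ¬ Nonsing n p B (spanV n p {i : Fin n | (i : ℕ) ≠ n - 1}))
    (h0n1 : OrthType n p B (spanV n p {i : Fin n | (i : ℕ) ≠ 0 ∧ (i : ℕ) ≠ n - 1}) (Subgroup.closure (r '' {i : Fin n | (i : ℕ) ≠ 0 ∧ (i : ℕ) ≠ n - 1})))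
    (hcond : Subgroup.closure (r '' {i : Fin n | (i : ℕ) ≠ 0 ∧ (i : ℕ) ≠ n - 1}) = O1 n p B (spanV n p {i : Fin n | (i : ℕ) ≠ 0 ∧ (i : ℕ) ≠ n - 1}) →
      Subgroup.closure (Set.range r) = O1 n p B ⊤) :
    Subgroup.closure (r '' {i : Fin n | (i : ℕ) ≠ 0}) ⊓ Subgroup.closure (r '' {i : Fin n | (i : ℕ) ≠ n - 1}) =
      Subgroup.closure (r '' {i : Fin n | (i : ℕ) ≠ 0 ∧ (i : ℕ) ≠ n - 1}) := by
  have : Fact p.Prime := ⟨hp⟩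
  set S := {i : Fin n | (i : ℕ) ≠ 0 ∧ (i : ℕ) ≠ n - 1}
  refine le_antisymm (fun g hg => ?_) (le_inf (Subgroup.closure_mono (Set.image_mono
    fun i hi => hi.1)) (Subgroup.closure_mono (Set.image_mono fun i hi => hi.2)))
  obtain ⟨hg0, hg1⟩ := Subgroup.mem_inf.mp hg
  have hgW : g ∈ OSub n p B (spanV n p S) := by
    rw [show S = {i : Fin n | (i : ℕ) ≠ 0} ∩ {i : Fin n | (i : ℕ) ≠ n - 1} from rfl, spanV_inter]
    exact OSub_inf_le hB.1 hV _ _ ⟨closure_image_le_OSub hB hint hV hodd hr _ hg0,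
      closure_image_le_OSub hB hint hV hodd hr _ hg1⟩
  rcases h0n1 with hO | hO1 | hO2
  · exact hO ▸ hgW
  · have h0 : {i : Fin n | (i : ℕ) ≠ 0} = insert ⟨n - 1, by omega⟩ S := by
      ext i; simp only [Set.mem_insert_iff, Set.mem_ofPred_eq, Fin.ext_iff, S]; omega
    have h1 : {i : Fin n | (i : ℕ) ≠ n - 1} = insert ⟨0, by omega⟩ S := by
      ext i; simp only [Set.mem_insert_iff, Set.mem_ofPred_eq, Fin.ext_iff, S]; omega
    rw [h0] at hsing hg0
    rw [h1] at hsing hg1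
    rcases hsing with hsing | hsing
    · exact mem_closure_of_mem_OSub_of_not_nonsing hB hint hV hodd hr hV0n1 hsing hO1
        (hcond hO1) hg0 hgW
    · exact mem_closure_of_mem_OSub_of_not_nonsing hB hint hV hodd hr hV0n1 hsing hO1
        (hcond hO1) hg1 hgW
  · obtain ⟨i, hi1, hi2, t, ht, hti⟩ := hsq
    refine absurd ?_ (r_not_mem_O2 hB hint hV hodd hr ht hti (spanV n p S))
    exact hO2 ▸ Subgroup.subset_closure ⟨i, ⟨by omega, by omega⟩, rfl⟩

/-- when `V` and `V_{0,n-1}` are nonsingular but `V₀` or `V_{n-1}` is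
singular, with `G_{0,n-1}ᵖ` of orthogonal type (and `Gᵖ = O₁(V)` in case
`G_{0,n-1}ᵖ = O₁(V_{0,n-1})`), one has `G₀ᵖ ∩ G_{n-1}ᵖ = G_{0,n-1}ᵖ`. -/
theorem statement6
    (n p : ℕ) (hn : 3 ≤ n) (hp : p.Prime) (hodd : p ≠ 2)
    (B : Matrix (Fin n) (Fin n) ℚ)
    (hB : GramOK n B) (hint : PIntegral n p B)
    (r : Fin n → GLV n p) (hr : ReflHyp n p B r)
    (hgen : Generic n p B)
    (hsq : ∃ i : Fin n, 1 ≤ (i : ℕ) ∧ (i : ℕ) ≤ n - 2 ∧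
      ∃ t : ZMod p, t ≠ 0 ∧ redQ p (B i i) = t ^ 2)
    (hV : Nonsing n p B ⊤)
    (hV0n1 : Nonsing n p B (spanV n p {i : Fin n | (i : ℕ) ≠ 0 ∧ (i : ℕ) ≠ n - 1}))
    (hsing : ¬ Nonsing n p B (spanV n p {i : Fin n | (i : ℕ) ≠ 0}) ∨ ¬ Nonsing n p B (spanV n p {i : Fin n | (i : ℕ) ≠ n - 1}))
    (h0n1 : OrthType n p B (spanV n p {i : Fin n | (i : ℕ) ≠ 0 ∧ (i : ℕ) ≠ n - 1}) (Subgroup.closure (r '' {i : Fin n | (i : ℕ) ≠ 0 ∧ (i : ℕ) ≠ n - 1})))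
    (hcond : Subgroup.closure (r '' {i : Fin n | (i : ℕ) ≠ 0 ∧ (i : ℕ) ≠ n - 1}) = O1 n p B (spanV n p {i : Fin n | (i : ℕ) ≠ 0 ∧ (i : ℕ) ≠ n - 1}) →
      Subgroup.closure (Set.range r) = O1 n p B ⊤) :
    Subgroup.closure (r '' {i : Fin n | (i : ℕ) ≠ 0}) ⊓ Subgroup.closure (r '' {i : Fin n | (i : ℕ) ≠ n - 1}) =
      Subgroup.closure (r '' {i : Fin n | (i : ℕ) ≠ 0 ∧ (i : ℕ) ≠ n - 1}) :=
  statement6_general n p hn hp hodd B hB hint r hr hsq hV hV0n1 hsing h0n1 hcond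

end Statement6
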